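/- arXiv:2301.01473 — 2 statements merged into one kernel-verified Lean document; each statement's English description precedes it below -/
import Mathlib

section
/- Let H be an n×n Hermitian matrix with zero diagonal and entries of absolute value at most 1 off the diagonal, with n distinct eigenvalues θ_1 < ... < θ_n. Let σ = min_{r≠s} |θ_r − θ_s|. Then σ² ≤ 12/(n+1). -/
open Matrix

private lemma sum_fin_id' (n : ℕ) : ∑ i : Fin n, (i:ℝ) = n*(n-1)/2 := by
  induction n with
  | zero => simp
  | succ m ih =>
    rw [Fin.sum_univ_castSucc]
    simp only [Fin.coe_castSucc, Fin.val_last] at *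
    rw [ih]; push_cast; ring

private lemma sum_fin_sq' (n : ℕ) : ∑ i : Fin n, (i:ℝ)^2 = n*(n-1)*(2*n-1)/6 := by
  induction n with
  | zero => simp
  | succ m ih =>
    rw [Fin.sum_univ_castSucc]
    simp only [Fin.coe_castSucc, Fin.val_last] at *
    rw [ih]; push_cast; ring

private lemma double_sum_sq' {n : ℕ} (f : Fin n → ℝ) :
    ∑ i : Fin n, ∑ j : Fin n, (f i - f j)^2
      = 2*n*(∑ i, (f i)^2) - 2*(∑ i, f i)^2 := by
  have : ∀ i j : Fin n, (f i - f j)^2 = (f i)^2 + (f j)^2 - 2*(f i * f j) := fun i j => by ring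
  simp only [this, Finset.sum_sub_distrib, Finset.sum_add_distrib, Finset.sum_const,
    Finset.card_univ, Fintype.card_fin, ← Finset.mul_sum, ← Finset.sum_mul]
  simp only [nsmul_eq_mul, ← Finset.mul_sum]
  ring

private lemma gap_nat' {n : ℕ} {g : Fin n → ℝ} {σ : ℝ} (hmono : StrictMono g)
    (hlow : ∀ i j : Fin n, i ≠ j → σ ≤ |g i - g j|) :
    ∀ d : ℕ, ∀ i j : Fin n, (j:ℕ) = (i:ℕ) + d → σ * d ≤ g j - g i := by
  intro d
  induction d with
  | zero => intro i j hij
            have : j = i := Fin.ext (by omega)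
            subst this; simp
  | succ m ih =>
    intro i j hij
    have hk : (i:ℕ) + m < n := by omega
    set k : Fin n := ⟨(i:ℕ) + m, hk⟩ with hkdef
    have h1 : σ * m ≤ g k - g i := ih i k rfl
    have hkj : k < j := by
      rw [Fin.lt_def]; simp [hkdef]; omega
    have h2 : σ ≤ g j - g k := by
      have := hlow j k (by exact fun h => absurd (h ▸ hkj) (lt_irrefl _))
      rwa [abs_of_pos (by linarith [hmono hkj])] at this
    push_cast
    linarith

private lemma gap_abs' {n : ℕ} {g : Fin n → ℝ} {σ : ℝ} (hmono : StrictMono g)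
    (hlow : ∀ i j : Fin n, i ≠ j → σ ≤ |g i - g j|) :
    ∀ i j : Fin n, σ * |(i:ℝ) - (j:ℝ)| ≤ |g i - g j| := by
  have key := gap_nat' hmono hlow
  intro i j
  rcases lt_trichotomy i j with h | h | h
  · have hd : (j:ℕ) = (i:ℕ) + ((j:ℕ) - (i:ℕ)) := by omega
    have := key _ i j hd
    rw [abs_of_nonpos (sub_nonpos.2 (by exact_mod_cast (Fin.lt_def.1 h).le)),
      abs_of_neg (by exact sub_neg.2 (hmono h))]
    push_cast [Nat.cast_sub (le_of_lt h)] at this ⊢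
    linarith
  · subst h; simp
  · have hd : (i:ℕ) = (j:ℕ) + ((i:ℕ) - (j:ℕ)) := by omega
    have := key _ j i hd
    rw [abs_of_nonneg (sub_nonneg.2 (by exact_mod_cast (Fin.lt_def.1 h).le)),
      abs_of_pos (by exact sub_pos.2 (hmono h))]
    push_cast [Nat.cast_sub (le_of_lt h)] at this ⊢
    linarith

private lemma sum_reindex' {n : ℕ} (f : Fin n → ℝ) (e : Equiv.Perm (Fin n)) :
    ∑ i : Fin n, ∑ j : Fin n, (f (e i) - f (e j))^2
      = ∑ i : Fin n, ∑ j : Fin n, (f i - f j)^2 := by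
  rw [← Equiv.sum_comp e (fun i => ∑ j : Fin n, (f i - f j)^2)]
  congr 1; ext i
  rw [← Equiv.sum_comp e (fun j => (f (e i) - f j)^2)]

/-- For an `n × n` Hermitian matrix `H` with zero diagonal, off-diagonal entries of
modulus at most 1, and distinct eigenvalues, the minimum eigenvalue gap `σ`
satisfies `σ² ≤ 12/(n+1)`. -/
theorem stmt2 {n : ℕ} (H : Matrix (Fin n) (Fin n) ℂ) (hH : H.IsHermitian)
    (hdiag : ∀ a, H a a = 0)
    (hoff : ∀ a b, a ≠ b → ‖H a b‖ ≤ 1)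
    (hdist : Function.Injective hH.eigenvalues)
    (σ : ℝ)
    (hσ : IsLeast {x : ℝ | ∃ r s : Fin n, r ≠ s ∧
      x = |hH.eigenvalues r - hH.eigenvalues s|} σ) :
    σ ^ 2 ≤ 12 / (n + 1) := by
  obtain ⟨⟨r0, s0, hrs0, hσval⟩, hlb⟩ := hσ
  -- n ≥ 2
  have hn2 : 2 ≤ n := by
    have h1 := r0.2; have h2 := s0.2
    have : (r0:ℕ) ≠ (s0:ℕ) := fun h => hrs0 (Fin.ext h)
    omega
  have hσ0 : 0 ≤ σ := hσval ▸ abs_nonneg _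
  set θ := hH.eigenvalues with hθ
  -- trace facts
  have hsum0 : ∑ i, θ i = 0 := by
    have h1 : H.trace = ∑ i, (θ i : ℂ) := by
      conv_lhs => rw [hH.spectral_theorem]
      rw [Unitary.conjStarAlgAut_apply, Matrix.trace_mul_cycle, Unitary.coe_star_mul_self, Matrix.one_mul,
        Matrix.trace_diagonal]
      rfl
    have h2 : H.trace = 0 := by simp [Matrix.trace, Matrix.diag, hdiag]
    rw [h2] at h1
    have h3 := h1.symm
    rw [← Complex.ofReal_sum] at h3
    exact_mod_cast h3
  have hsumsq : ∑ i, (θ i)^2 ≤ (n:ℝ) * ((n:ℝ) - 1) := by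
    have h1 : (H * H).trace = ∑ i, (θ i : ℂ)^2 := by
      conv_lhs => rw [hH.spectral_theorem]
      rw [Unitary.conjStarAlgAut_apply]
      rw [show ∀ U D V : Matrix (Fin n) (Fin n) ℂ, (U*D*V)*(U*D*V) = U*(D*((V*U)*(D*V))) by
        intros; noncomm_ring]
      rw [Unitary.coe_star_mul_self, Matrix.one_mul]
      rw [show ∀ U D : Matrix (Fin n) (Fin n) ℂ, U*(D*(D*star U)) = (U*(D*D))*star U from
        fun U D => by noncomm_ring]
      rw [Matrix.trace_mul_comm, ← Matrix.mul_assoc, Unitary.coe_star_mul_self, Matrix.one_mul,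
        Matrix.diagonal_mul_diagonal, Matrix.trace_diagonal]
      simp [sq]
      rfl
    have h2 : (H * H).trace = ∑ a, ∑ b, (Complex.normSq (H a b) : ℂ) := by
      simp only [Matrix.trace, Matrix.diag, Matrix.mul_apply]
      congr 1; ext a; congr 1; ext b
      have : H b a = star (H a b) := by
        conv_lhs => rw [← hH.eq]
        rfl
      rw [this, Complex.star_def, Complex.mul_conj]
    have h3 : ∑ i, (θ i)^2 = ∑ a, ∑ b, Complex.normSq (H a b) := by
      have := h1.symm.trans h2
      push_cast at this
      exact_mod_cast this
    rw [h3]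
    have hb : ∀ a b : Fin n, Complex.normSq (H a b) ≤ if b = a then 0 else 1 := by
      intro a b
      by_cases h : b = a
      · simp [h, hdiag]
      · simp only [h, if_false]
        have := hoff a b (fun hh => h hh.symm)
        have h0 := Complex.sq_norm (H a b)
        nlinarith [norm_nonneg (H a b)]
    calc ∑ a, ∑ b, Complex.normSq (H a b)
        ≤ ∑ a : Fin n, ∑ b : Fin n, if b = a then (0:ℝ) else 1 := by
          apply Finset.sum_le_sum; intro a _; exact Finset.sum_le_sum fun b _ => hb a b
      _ = (n:ℝ) * ((n:ℝ) - 1) := by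
          have hrow : ∀ a : Fin n, ∑ b : Fin n, (if b = a then (0:ℝ) else 1) = (n:ℝ) - 1 := by
            intro a
            have hpt : ∀ b : Fin n, (if b = a then (0:ℝ) else 1)
                = 1 - (if b = a then 1 else 0) := by
              intro b; by_cases h : b = a <;> simp [h]
            simp only [hpt, Finset.sum_sub_distrib, Finset.sum_const, Finset.card_univ,
              Finset.sum_ite_eq', Finset.mem_univ, if_true]
            simp
          rw [Finset.sum_congr rfl fun a _ => hrow a, Finset.sum_const, Finset.card_univ,
            Fintype.card_fin, nsmul_eq_mul]
  -- sorted eigenvalues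
  set e := Tuple.sort θ with he
  set g : Fin n → ℝ := θ ∘ e with hg
  have hmono : StrictMono g :=
    (Tuple.monotone_sort θ).strictMono_of_injective (hdist.comp e.injective)
  have hlow : ∀ i j : Fin n, i ≠ j → σ ≤ |g i - g j| := by
    intro i j hij
    exact hlb ⟨e i, e j, fun h => hij (e.injective h), rfl⟩
  have habs := gap_abs' hmono hlow
  -- pointwise squared bound, summed
  have hpt : ∀ i j : Fin n, σ^2 * ((i:ℝ) - (j:ℝ))^2 ≤ (g i - g j)^2 := by
    intro i j
    have h1 := habs i j
    have h2 : (σ * |(i:ℝ) - (j:ℝ)|)^2 ≤ |g i - g j|^2 :=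
      pow_le_pow_left₀ (by positivity) h1 2
    rw [mul_pow, sq_abs, sq_abs] at h2
    exact h2
  have hsumineq : σ^2 * (∑ i : Fin n, ∑ j : Fin n, ((i:ℝ) - (j:ℝ))^2)
      ≤ ∑ i : Fin n, ∑ j : Fin n, (g i - g j)^2 := by
    rw [Finset.mul_sum]
    apply Finset.sum_le_sum; intro i _
    rw [Finset.mul_sum]
    exact Finset.sum_le_sum fun j _ => hpt i j
  have hre : ∑ i : Fin n, ∑ j : Fin n, (g i - g j)^2
      = ∑ i : Fin n, ∑ j : Fin n, (θ i - θ j)^2 := sum_reindex' θ e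
  have hA : ∑ i : Fin n, ∑ j : Fin n, (θ i - θ j)^2 = 2*(n:ℝ)*(∑ i, (θ i)^2) := by
    rw [double_sum_sq' θ, hsum0]; ring
  have hB : ∑ i : Fin n, ∑ j : Fin n, ((i:ℝ) - (j:ℝ))^2
      = (n:ℝ)^2 * ((n:ℝ) - 1) * ((n:ℝ) + 1) / 6 := by
    rw [double_sum_sq' (fun i : Fin n => (i:ℝ)), sum_fin_id' n, sum_fin_sq' n]
    ring
  -- put it together
  have hn2r : (2:ℝ) ≤ (n:ℝ) := by exact_mod_cast hn2
  have key : σ^2 * ((n:ℝ)^2 * ((n:ℝ) - 1) * ((n:ℝ) + 1) / 6) ≤ 2*(n:ℝ)*((n:ℝ)*((n:ℝ)-1)) := by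
    rw [← hB]
    calc σ^2 * (∑ i : Fin n, ∑ j : Fin n, ((i:ℝ) - (j:ℝ))^2)
        ≤ ∑ i : Fin n, ∑ j : Fin n, (g i - g j)^2 := hsumineq
      _ = 2*(n:ℝ)*(∑ i, (θ i)^2) := by rw [hre, hA]
      _ ≤ 2*(n:ℝ)*((n:ℝ)*((n:ℝ)-1)) := by
          have : (0:ℝ) ≤ 2*(n:ℝ) := by linarith
          nlinarith [hsumsq]
  rw [le_div_iff₀ (by positivity : (0:ℝ) < (n:ℝ) + 1)]
  have hc : (0:ℝ) < (n:ℝ)^2 * ((n:ℝ) - 1) / 6 := by nlinarith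
  have key2 : (σ^2 * ((n:ℝ)+1)) * ((n:ℝ)^2 * ((n:ℝ) - 1) / 6)
      ≤ 12 * ((n:ℝ)^2 * ((n:ℝ) - 1) / 6) := by nlinarith [key]
  exact le_of_mul_le_mul_right key2 hc
end

section
/- There exist Hermitian matrices H (of size 4) admitting perfect state transfer from a vertex a to a distinct vertex b at some time τ, but with no perfect state transfer from b back to a at any time (one-way perfect state transfer). -/
open Matrix Complex

noncomputable section PST15

def pstω : ℂ := Complex.exp Complex.I

lemma pstω_ne : pstω ≠ 0 := Complex.exp_ne_zero _

lemma pstω_conj : (starRingEnd ℂ) pstω = pstω⁻¹ := by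
  rw [pstω, ← Complex.exp_conj, ← Complex.exp_neg]
  simp

def pstv : Fin 4 → Fin 4 → ℂ :=
  ![![1/2, 1/2, 1/2, 1/2],
    ![1/2, -(1/2), 1/2, -(1/2)],
    ![1/2, pstω/2, -(1/2), -(pstω/2)],
    ![1/2, -(pstω/2), -(1/2), pstω/2]]

def pstcv : Fin 4 → Fin 4 → ℂ :=
  ![![1/2, 1/2, 1/2, 1/2],
    ![1/2, -(1/2), 1/2, -(1/2)],
    ![1/2, pstω⁻¹/2, -(1/2), -(pstω⁻¹/2)],
    ![1/2, -(pstω⁻¹/2), -(1/2), pstω⁻¹/2]]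

lemma pstcv_eq (k i : Fin 4) : (starRingEnd ℂ) (pstv k i) = pstcv k i := by
  fin_cases k <;> fin_cases i <;>
    simp [pstv, pstcv, map_div₀, pstω_conj, Complex.conj_ofNat] <;> norm_num [Matrix.vecHead, Matrix.vecTail, map_ofNat]

lemma pstv_eq (k i : Fin 4) : (starRingEnd ℂ) (pstcv k i) = pstv k i := by
  rw [← pstcv_eq, Complex.conj_conj]

def pstθ : Fin 4 → ℝ := ![0, Real.pi, 1, 1 + Real.pi]

def pstH : Matrix (Fin 4) (Fin 4) ℂ :=
  Matrix.of fun i j => ∑ k, (pstθ k : ℂ) * pstv k i * pstcv k j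

lemma pstH_herm : pstH.IsHermitian := by
  ext i j
  simp only [pstH, conjTranspose_apply, Matrix.of_apply, star_sum, star_mul',
    RCLike.star_def, _root_.map_mul, Complex.conj_ofReal, pstcv_eq, pstv_eq]
  exact Finset.sum_congr rfl fun k _ => by ring

set_option maxHeartbeats 4000000 in
lemma pstH_eig (m : Fin 4) : pstH *ᵥ pstv m = (pstθ m : ℂ) • pstv m := by
  have hω := pstω_ne
  funext i
  fin_cases m <;> fin_cases i <;>
    · simp only [pstH, pstv, pstcv, pstθ, Matrix.mulVec, dotProduct, Matrix.of_apply,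
        Fin.sum_univ_four, Pi.smul_apply, smul_eq_mul]
      simp only [Matrix.cons_val_zero, Matrix.cons_val_one, Matrix.head_cons,
        Matrix.cons_val_two, Matrix.tail_cons, Matrix.cons_val_three,
        Complex.ofReal_zero, Complex.ofReal_one, Complex.ofReal_add, Fin.reduceFinMk, Matrix.cons_val]
      field_simp [hω]
      try ring_nf
      try field_simp
      try ring_nf


section Aux
attribute [local instance] Matrix.linftyOpNormedRing Matrix.linftyOpNormedAlgebra

set_option maxHeartbeats 1000000 in
theorem exp_mulVec_eig (A : Matrix (Fin 4) (Fin 4) ℂ) (v : Fin 4 → ℂ) (μ : ℂ) (h : A *ᵥ v = μ • v) :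
    NormedSpace.exp A *ᵥ v = Complex.exp μ • v := by
  have hpow : ∀ n : ℕ, (A ^ n) *ᵥ v = μ ^ n • v := by
    intro n
    induction n with
    | zero => simp
    | succ n ih =>
      rw [pow_succ', pow_succ', ← mulVec_mulVec, ih, mulVec_smul, h, smul_smul, mul_comm]
  let L : Matrix (Fin 4) (Fin 4) ℂ →L[ℂ] (Fin 4 → ℂ) :=
    LinearMap.toContinuousLinearMap
      { toFun := fun B => B *ᵥ v
        map_add' := fun B C => add_mulVec B C v
        map_smul' := fun c B => smul_mulVec c B v }
  have hL : ∀ B, L B = B *ᵥ v := fun B => rfl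
  rw [← hL, NormedSpace.exp_eq_tsum ℂ, L.map_tsum (NormedSpace.expSeries_summable' (𝕂 := ℂ) A)]
  have key : ∀ n : ℕ, L (((n.factorial : ℂ))⁻¹ • A ^ n) = (((n.factorial : ℂ))⁻¹ * μ ^ n) • v := by
    intro n
    rw [L.map_smul, hL, hpow, smul_smul]
  simp_rw [key]
  rw [Summable.tsum_smul_const, Complex.exp_eq_exp_ℂ, NormedSpace.exp_eq_tsum ℂ]
  · simp_rw [smul_eq_mul]
  · have := NormedSpace.expSeries_summable' (𝕂 := ℂ) μ
    simpa [smul_eq_mul] using this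
end Aux

lemma pstU (τ : ℝ) (m : Fin 4) :
    (NormedSpace.exp ((-(Complex.I * τ)) • pstH)) *ᵥ pstv m
      = Complex.exp (-(Complex.I * τ) * (pstθ m : ℂ)) • pstv m := by
  apply exp_mulVec_eig
  rw [smul_mulVec, pstH_eig, smul_smul]

lemma pst_e0 : (Pi.single 0 1 : Fin 4 → ℂ)
    = (1/2 : ℂ) • (pstv 0 + pstv 1 + pstv 2 + pstv 3) := by
  funext i
  fin_cases i <;> simp [pstv, Pi.single_apply] <;> ring

lemma pst_e1 : (Pi.single 1 1 : Fin 4 → ℂ)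
    = (1/2 : ℂ) • (pstv 0 - pstv 1 + pstω⁻¹ • pstv 2 - pstω⁻¹ • pstv 3) := by
  have hω := pstω_ne
  funext i
  fin_cases i <;> simp [pstv, Pi.single_apply] <;> field_simp <;> ring

end PST15

/-- There is a Hermitian 4×4 matrix admitting perfect state transfer from a vertex
`a` to a distinct vertex `b` at some (positive) time, but with no perfect state
transfer from `b` back to `a` at any positive time. -/
theorem stmt15 :
    ∃ H : Matrix (Fin 4) (Fin 4) ℂ, H.IsHermitian ∧
      ∃ a b : Fin 4, a ≠ b ∧
        (∃ τ : ℝ, 0 < τ ∧ ∃ α : ℂ, ‖α‖ = 1 ∧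
          (NormedSpace.exp ((-(Complex.I * τ)) • H)) *ᵥ (Pi.single a 1 : Fin 4 → ℂ)
            = α • (Pi.single b 1 : Fin 4 → ℂ))
        ∧ ∀ τ : ℝ, 0 < τ → ¬ ∃ α : ℂ, ‖α‖ = 1 ∧
          (NormedSpace.exp ((-(Complex.I * τ)) • H)) *ᵥ (Pi.single b 1 : Fin 4 → ℂ)
            = α • (Pi.single a 1 : Fin 4 → ℂ) := by
  have hω := pstω_ne
  refine ⟨pstH, pstH_herm, 0, 1, by decide, ⟨1, one_pos, 1, by simp, ?_⟩, ?_⟩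
  · -- forward transfer at τ = 1
    rw [pst_e0, mulVec_smul, mulVec_add, mulVec_add, mulVec_add, pstU, pstU, pstU, pstU,
      pst_e1]
    have hE0 : Complex.exp (-(Complex.I * (1:ℝ)) * ((pstθ 0 : ℝ) : ℂ)) = 1 := by
      simp [pstθ]
    have hE1 : Complex.exp (-(Complex.I * (1:ℝ)) * ((pstθ 1 : ℝ) : ℂ)) = -1 := by
      have harg : (-(Complex.I * (1:ℝ)) * ((pstθ 1 : ℝ) : ℂ)) = -((Real.pi : ℂ) * Complex.I) := by
        simp [pstθ]; ring
      rw [harg, Complex.exp_neg, Complex.exp_pi_mul_I]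
      norm_num
    have hE2 : Complex.exp (-(Complex.I * (1:ℝ)) * ((pstθ 2 : ℝ) : ℂ)) = pstω⁻¹ := by
      have harg : (-(Complex.I * (1:ℝ)) * ((pstθ 2 : ℝ) : ℂ)) = -Complex.I := by
        simp [pstθ]
      rw [harg, Complex.exp_neg, pstω]
    have hE3 : Complex.exp (-(Complex.I * (1:ℝ)) * ((pstθ 3 : ℝ) : ℂ)) = -pstω⁻¹ := by
      have harg : (-(Complex.I * (1:ℝ)) * ((pstθ 3 : ℝ) : ℂ))
          = -Complex.I + -((Real.pi : ℂ) * Complex.I) := by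
        simp [pstθ]; push_cast; ring
      rw [harg, Complex.exp_add, Complex.exp_neg, Complex.exp_neg, Complex.exp_pi_mul_I, pstω]
      norm_num
    rw [hE0, hE1, hE2, hE3]
    module
  · -- no transfer back
    rintro τ hτ ⟨α, hα, heq⟩
    rw [pst_e1, mulVec_smul, mulVec_sub, mulVec_add, mulVec_sub, mulVec_smul, mulVec_smul,
      pstU, pstU, pstU, pstU] at heq
    set P := Complex.exp (-(Complex.I * τ) * (Real.pi : ℂ)) with hPdef
    set Q := Complex.exp (-(Complex.I * τ)) with hQdef
    have hE0 : Complex.exp (-(Complex.I * τ) * ((pstθ 0 : ℝ) : ℂ)) = 1 := by simp [pstθ]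
    have hE1 : Complex.exp (-(Complex.I * τ) * ((pstθ 1 : ℝ) : ℂ)) = P := by
      rw [hPdef]; norm_num [pstθ]
    have hE2 : Complex.exp (-(Complex.I * τ) * ((pstθ 2 : ℝ) : ℂ)) = Q := by
      rw [hQdef]; norm_num [pstθ, Matrix.cons_val_two, Matrix.vecHead, Matrix.vecTail]
    have hE3 : Complex.exp (-(Complex.I * τ) * ((pstθ 3 : ℝ) : ℂ)) = Q * P := by
      rw [hQdef, hPdef, ← Complex.exp_add]
      congr 1
      simp [pstθ]
      ring
    rw [hE0, hE1, hE2, hE3] at heq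
    have h1 := congrFun heq 1
    have h3 := congrFun heq 3
    have h0 := congrFun heq 0
    simp only [Pi.smul_apply, Pi.add_apply, Pi.sub_apply, pstv, smul_eq_mul,
      Matrix.cons_val_zero, Matrix.cons_val_one, Matrix.head_cons, Matrix.cons_val_two,
      Matrix.tail_cons, Matrix.cons_val_three, Pi.single_apply] at h1 h3 h0
    norm_num at h1 h3 h0
    rw [if_neg (by decide : ¬ (3:Fin 4) = 0)] at h3
    have hωinv : pstω⁻¹ * pstω = 1 := inv_mul_cancel₀ hω
    have hP : P = -1 := by linear_combination h1 + 2*h3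
    have hαz : α = (1 + pstω⁻¹ * Q)/2 := by
      linear_combination (-1 : ℂ)*h0 - ((1 + pstω⁻¹*Q)/4)*hP
    set z := pstω⁻¹ * Q with hzdef
    have hzexp : z = Complex.exp (-Complex.I + -(Complex.I * τ)) := by
      rw [Complex.exp_add, Complex.exp_neg, hzdef, pstω, hQdef]
    have habsz : ‖z‖ = 1 := by
      rw [hzexp, Complex.norm_exp]
      simp
    have habs2 : ‖1 + z‖ = 2 := by
      rw [hαz, norm_div] at hα
      have h2 : ‖(2 : ℂ)‖ = 2 := by norm_num
      rw [h2] at hα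
      field_simp at hα
      linarith [hα.symm ▸ le_refl ‖1+z‖]
    have hn1 : Complex.normSq z = 1 := by rw [← Complex.sq_norm, habsz]; norm_num
    have hn2 : Complex.normSq (1+z) = 4 := by rw [← Complex.sq_norm, habs2]; norm_num
    have hzre : z.re = 1 := by
      simp [Complex.normSq_apply] at hn1 hn2
      nlinarith
    have hzim : z.im = 0 := by
      simp [Complex.normSq_apply] at hn1
      nlinarith
    have hz1 : z = 1 := Complex.ext (by simp [hzre]) (by simp [hzim])
    rw [hzexp] at hz1
    obtain ⟨n, hn⟩ := Complex.exp_eq_one_iff.mp hz1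
    have hnim : -1 - τ = (n : ℝ) * (2 * Real.pi) := by
      have := congrArg Complex.im hn
      simpa [sub_eq_add_neg] using this
    have hPone : Complex.exp (-(Complex.I * τ) * (Real.pi:ℂ) + Real.pi * Complex.I) = 1 := by
      rw [Complex.exp_add, ← hPdef, hP, Complex.exp_pi_mul_I]
      ring
    obtain ⟨m, hm⟩ := Complex.exp_eq_one_iff.mp hPone
    have hmim : -(τ * Real.pi) + Real.pi = (m : ℝ) * (2 * Real.pi) := by
      have := congrArg Complex.im hm
      simpa using this
    have hpi : Real.pi ≠ 0 := Real.pi_ne_zero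
    have hτm : 1 - τ = 2 * m := by
      have : Real.pi * (1 - τ) = Real.pi * (2 * m) := by ring_nf; ring_nf at hmim; linarith
      exact mul_left_cancel₀ hpi this
    by_cases hn0 : n = 0
    · rw [hn0] at hnim
      simp at hnim
      linarith
    · have key : ((-n : ℤ) : ℝ) * Real.pi = ((1 - m : ℤ) : ℝ) := by
        push_cast
        nlinarith [hnim, hτm]
      exact (irrational_pi.intCast_mul (by omega : (-n : ℤ) ≠ 0)).ne_int (1 - m) key
end
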